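/- Let Ξ be a measurable space, 𝒫 a convex set of probability measures on Ξ, R : 𝒫 → ℝ concave, and dR : 𝒫 × 𝒫 → ℝ a function such that for all P, Q ∈ 𝒫, (R((1−γ)·P + γ·Q) − R(P))/γ → dR(P;Q) as γ ↓ 0. Assume R is C-smooth for some C ≥ 0, and let δ ≥ 0 and K ≥ 1. Let P_0 ∈ 𝒫, and for k = 0, 1, …, 2K+1 define step sizes γ_k := 2/(k+2) for 0 ≤ k ≤ K−1 and γ_k := 2/(K+2) for K ≤ k ≤ 2K+1; let Q_k ∈ 𝒫 satisfy dR(P_k;Q) ≤ δ·γ_k·C + dR(P_k;Q_k) for all Q ∈ 𝒫, set P_{k+1} := (1−γ_k)·P_k + γ_k·Q_k, and set g_k := dR(P_k;Q_k). Then: (a) there exists k̂ with K ≤ k̂ ≤ 2K+1 such that g_{k̂} ≤ 4·C·(1+δ)/(K+2); and (b) for every k̂ with K ≤ k̂ ≤ 2K+1 and g_{k̂} ≤ 4·C·(1+δ)/(K+2), it holds that for every Q ∈ 𝒫: R(Q) − R(P_{k̂}) ≤ dR(P_{k̂};Q) ≤ 2·C·(2+3δ)/(K+2). -/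
import Mathlib


open MeasureTheory Filter Set
open Topology

/-- The mixture `(1-γ)·P + γ·Q` of two measures. -/
noncomputable def mix {Ξ : Type*} [MeasurableSpace Ξ] (P Q : Measure Ξ) (γ : ℝ) : Measure Ξ :=
  ENNReal.ofReal (1 - γ) • P + ENNReal.ofReal γ • Q

set_option maxHeartbeats 1000000

lemma mix_mix {Ξ : Type*} [MeasurableSpace Ξ] (P Q : Measure Ξ) {γ t : ℝ}
    (hγ0 : 0 ≤ γ) (hγ1 : γ ≤ 1) (ht0 : 0 ≤ t) (ht1 : t ≤ 1) :
    mix P (mix P Q γ) t = mix P Q (t * γ) := by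
  unfold mix
  rw [smul_add, smul_smul, smul_smul, ← add_assoc, ← add_smul]
  congr 2
  · rw [← ENNReal.ofReal_mul ht0,
      ← ENNReal.ofReal_add (by linarith) (by nlinarith)]
    congr 1
    ring
  · exact (ENNReal.ofReal_mul ht0).symm

/-- Proposition 4.3 (Aposteriori bounds): running the FW algorithm with step sizes
`γ_k = 2/(k+2)` for `k < K` and `γ_k = 2/(K+2)` for `K ≤ k ≤ 2K+1`, and approximate
FW-gaps `g_k = dR(P_k;Q_k)`, (a) some `k̂ ∈ {K,…,2K+1}` satisfies
`g_{k̂} ≤ 4C(1+δ)/(K+2)`, and (b) every such `k̂` satisfies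
`R(Q) − R(P_{k̂}) ≤ dR(P_{k̂};Q) ≤ 2C(2+3δ)/(K+2)` for every `Q ∈ Pset`. -/
theorem FW_aposteriori_bounds {Ξ : Type*} [MeasurableSpace Ξ]
    (Pset : Set (Measure Ξ)) (hprob : ∀ P ∈ Pset, IsProbabilityMeasure P)
    (hconv : ∀ P ∈ Pset, ∀ Q ∈ Pset, ∀ γ ∈ Set.Icc (0 : ℝ) 1, mix P Q γ ∈ Pset)
    (R : Measure Ξ → ℝ) (dR : Measure Ξ → Measure Ξ → ℝ)
    (hconc : ∀ P ∈ Pset, ∀ Q ∈ Pset, ∀ γ ∈ Set.Icc (0 : ℝ) 1,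
      (1 - γ) * R P + γ * R Q ≤ R (mix P Q γ))
    (hdR : ∀ P ∈ Pset, ∀ Q ∈ Pset,
      Tendsto (fun γ : ℝ => (R (mix P Q γ) - R P) / γ)
        (nhdsWithin (0 : ℝ) (Set.Ioi 0)) (nhds (dR P Q)))
    (C : ℝ) (hC : 0 ≤ C)
    (hsmooth : ∀ P ∈ Pset, ∀ Q ∈ Pset, ∀ γ ∈ Set.Icc (0 : ℝ) 1,
      dR (mix P Q γ) P + dR P (mix P Q γ) ≤ γ ^ 2 * C)
    (δ : ℝ) (hδ : 0 ≤ δ)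
    (K : ℕ) (hK : 1 ≤ K)
    (γseq : ℕ → ℝ)
    (hγseq : ∀ k : ℕ, γseq k = if k < K then 2 / ((k : ℝ) + 2) else 2 / ((K : ℝ) + 2))
    (P Qs : ℕ → Measure Ξ)
    (hP0 : P 0 ∈ Pset)
    (hQmem : ∀ k ≤ 2 * K + 1, Qs k ∈ Pset)
    (horacle : ∀ k ≤ 2 * K + 1, ∀ Q ∈ Pset,
      dR (P k) Q ≤ δ * γseq k * C + dR (P k) (Qs k))
    (hupdate : ∀ k ≤ 2 * K + 1, P (k + 1) = mix (P k) (Qs k) (γseq k)) :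
    (∃ khat : ℕ, K ≤ khat ∧ khat ≤ 2 * K + 1 ∧
      dR (P khat) (Qs khat) ≤ 4 * C * (1 + δ) / ((K : ℝ) + 2)) ∧
    (∀ khat : ℕ, K ≤ khat → khat ≤ 2 * K + 1 →
      dR (P khat) (Qs khat) ≤ 4 * C * (1 + δ) / ((K : ℝ) + 2) →
      ∀ Q ∈ Pset, R Q - R (P khat) ≤ dR (P khat) Q ∧
        dR (P khat) Q ≤ 2 * C * (2 + 3 * δ) / ((K : ℝ) + 2)) := by
  have hKR : (0:ℝ) < (K:ℝ) + 2 := by positivity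
  -- the Gateaux derivative scales along mixtures
  have hscale : ∀ P' ∈ Pset, ∀ Q' ∈ Pset, ∀ γ : ℝ, 0 < γ → γ ≤ 1 →
      dR P' (mix P' Q' γ) = γ * dR P' Q' := by
    intro P' hP' Q' hQ' γ hγ0 hγ1
    have hMmem : mix P' Q' γ ∈ Pset := hconv P' hP' Q' hQ' γ ⟨hγ0.le, hγ1⟩
    have hmap : Tendsto (fun t : ℝ => t * γ) (𝓝[>] 0) (𝓝[>] 0) := by
      refine tendsto_nhdsWithin_of_tendsto_nhds_of_eventually_within _ ?_ ?_
      · have : Tendsto (fun t : ℝ => t * γ) (𝓝 0) (𝓝 (0 * γ)) := tendsto_id.mul_const γ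
        simpa using this.mono_left nhdsWithin_le_nhds
      · filter_upwards [self_mem_nhdsWithin] with t ht
        exact mul_pos ht hγ0
    have key : Tendsto (fun t : ℝ => γ * ((R (mix P' Q' (t * γ)) - R P') / (t * γ)))
        (𝓝[>] (0:ℝ)) (𝓝 (γ * dR P' Q')) :=
      ((hdR P' hP' Q' hQ').comp hmap).const_mul γ
    have heq : ∀ᶠ t in 𝓝[>] (0:ℝ),
        γ * ((R (mix P' Q' (t * γ)) - R P') / (t * γ))
          = (R (mix P' (mix P' Q' γ) t) - R P') / t := by
      filter_upwards [Ioo_mem_nhdsGT_of_mem (by norm_num : (0:ℝ) ∈ Ico (0:ℝ) 1),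
        self_mem_nhdsWithin] with t ht _
      rw [mix_mix P' Q' hγ0.le hγ1 ht.1.le ht.2.le]
      have ht0 : t ≠ 0 := ne_of_gt ht.1
      field_simp
    exact tendsto_nhds_unique (hdR P' hP' _ hMmem) (key.congr' heq)
  -- gradient inequality from concavity
  have hgrad : ∀ P' ∈ Pset, ∀ Q' ∈ Pset, R Q' - R P' ≤ dR P' Q' := by
    intro P' hP' Q' hQ'
    refine ge_of_tendsto (hdR P' hP' Q' hQ') ?_
    filter_upwards [Ioo_mem_nhdsGT_of_mem (by norm_num : (0:ℝ) ∈ Ico (0:ℝ) 1),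
      self_mem_nhdsWithin] with γ hγ _
    have h := hconc P' hP' Q' hQ' γ ⟨hγ.1.le, hγ.2.le⟩
    rw [le_div_iff₀ hγ.1]
    nlinarith [hγ.1]
  -- descent lemma
  have hdesc : ∀ P' ∈ Pset, ∀ Q' ∈ Pset, ∀ γ : ℝ, 0 < γ → γ ≤ 1 →
      R P' + γ * dR P' Q' - γ ^ 2 * C ≤ R (mix P' Q' γ) := by
    intro P' hP' Q' hQ' γ hγ0 hγ1
    have hMmem : mix P' Q' γ ∈ Pset := hconv P' hP' Q' hQ' γ ⟨hγ0.le, hγ1⟩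
    have h1 := hgrad _ hMmem _ hP'
    have h2 := hsmooth P' hP' Q' hQ' γ ⟨hγ0.le, hγ1⟩
    have h3 := hscale P' hP' Q' hQ' γ hγ0 hγ1
    linarith
  -- step sizes are in (0,1]
  have hγ01 : ∀ k : ℕ, 0 < γseq k ∧ γseq k ≤ 1 := by
    intro k
    rw [hγseq k]
    split
    · constructor
      · positivity
      · rw [div_le_one (by positivity)]
        have : (0:ℝ) ≤ (k:ℝ) := Nat.cast_nonneg k
        linarith
    · constructor
      · positivity
      · rw [div_le_one hKR]
        have : (0:ℝ) ≤ (K:ℝ) := Nat.cast_nonneg K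
        linarith
  -- all iterates remain in Pset
  have hPmem : ∀ k, k ≤ 2 * K + 2 → P k ∈ Pset := by
    intro k
    induction k with
    | zero => exact fun _ => hP0
    | succ n ih =>
      intro h
      rw [hupdate n (by omega)]
      exact hconv _ (ih (by omega)) _ (hQmem n (by omega)) _ ⟨(hγ01 n).1.le, (hγ01 n).2⟩
  -- one-step recursion for the gap
  have hrec : ∀ k ≤ 2 * K + 1, ∀ Q ∈ Pset,
      R Q - R (P (k + 1)) ≤ (1 - γseq k) * (R Q - R (P k))
        + (γseq k) ^ 2 * (C * (1 + δ)) := by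
    intro k hk Q hQ
    have hPk : P k ∈ Pset := hPmem k (by omega)
    have hQk : Qs k ∈ Pset := hQmem k hk
    have h1 := hdesc _ hPk _ hQk (γseq k) (hγ01 k).1 (hγ01 k).2
    have h2 := horacle k hk Q hQ
    have h3 := hgrad _ hPk _ hQ
    rw [hupdate k hk]
    have hγ := (hγ01 k).1
    nlinarith [mul_le_mul_of_nonneg_left (h3.trans h2) hγ.le]
  -- phase 1: decreasing step sizes, gap ≤ 4C'/(k+2) for 1 ≤ k ≤ K
  have hph1 : ∀ Q ∈ Pset, ∀ k : ℕ, 1 ≤ k → k ≤ K →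
      R Q - R (P k) ≤ 4 * (C * (1 + δ)) / ((k : ℝ) + 2) := by
    intro Q hQ k
    induction k with
    | zero => omega
    | succ n ih =>
      intro _ hnK
      have hrecn := hrec n (by omega) Q hQ
      rcases Nat.eq_zero_or_pos n with h0 | hn
      · subst h0
        have hγ0 : γseq 0 = 1 := by
          rw [hγseq 0, if_pos (by omega : 0 < K)]
          norm_num
        rw [hγ0] at hrecn
        have hCp : 0 ≤ C * (1 + δ) := by positivity
        push_cast
        nlinarith
      · have ihn := ih hn (by omega)
        have hγn : γseq n = 2 / ((n : ℝ) + 2) := by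
          rw [hγseq n]
          rw [if_pos (by omega)]
        rw [hγn] at hrecn
        set x : ℝ := (n : ℝ) + 2 with hx
        have hx2 : (2:ℝ) ≤ x := by
          have h0n : (0:ℝ) ≤ (n:ℝ) := Nat.cast_nonneg n
          linarith [hx.ge]
        have hx0 : (0:ℝ) < x := by linarith
        have hCp : 0 ≤ C * (1 + δ) := by positivity
        have step1 : (1 - 2 / x) * (R Q - R (P n)) ≤ (1 - 2 / x) * (4 * (C * (1 + δ)) / x) := by
          apply mul_le_mul_of_nonneg_left ihn
          rw [sub_nonneg, div_le_one hx0]; linarith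
        have hlhs : (1 - 2 / x) * (4 * (C * (1 + δ)) / x) + (2 / x) ^ 2 * (C * (1 + δ))
            = 4 * (C * (1 + δ)) * (x - 1) / x ^ 2 := by
          field_simp
          ring
        have key : (1 - 2 / x) * (4 * (C * (1 + δ)) / x) + (2 / x) ^ 2 * (C * (1 + δ))
            ≤ 4 * (C * (1 + δ)) / (x + 1) := by
          rw [hlhs, div_le_div_iff₀ (by positivity) (by linarith)]
          nlinarith
        have final : R Q - R (P (n + 1)) ≤ 4 * (C * (1 + δ)) / (x + 1) := by linarith
        have hcast : ((n + 1 : ℕ) : ℝ) + 2 = x + 1 := by push_cast [hx]; ring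
        rw [hcast]
        exact final
  -- phase 2: constant step size keeps the gap below 4C'/(K+2)
  have hph2 : ∀ Q ∈ Pset, ∀ j : ℕ, K + j ≤ 2 * K + 2 →
      R Q - R (P (K + j)) ≤ 4 * (C * (1 + δ)) / ((K : ℝ) + 2) := by
    intro Q hQ j
    induction j with
    | zero => intro _; exact hph1 Q hQ K hK le_rfl
    | succ m ih =>
      intro hj
      have ihm := ih (by omega)
      have hγm : γseq (K + m) = 2 / ((K : ℝ) + 2) := by
        rw [hγseq, if_neg (by omega)]
      have hrecm := hrec (K + m) (by omega) Q hQ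
      rw [hγm] at hrecm
      have hx0 : (0:ℝ) < (K:ℝ) + 2 := hKR
      have hx2 : (2:ℝ) ≤ (K:ℝ) + 2 := by
        have : (0:ℝ) ≤ (K:ℝ) := Nat.cast_nonneg K
        linarith
      have hCp : 0 ≤ C * (1 + δ) := by positivity
      have step1 : (1 - 2 / ((K:ℝ)+2)) * (R Q - R (P (K + m)))
          ≤ (1 - 2 / ((K:ℝ)+2)) * (4 * (C * (1 + δ)) / ((K:ℝ)+2)) := by
        apply mul_le_mul_of_nonneg_left ihm
        rw [sub_nonneg, div_le_one hx0]; linarith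
      have key : (1 - 2 / ((K:ℝ)+2)) * (4 * (C * (1 + δ)) / ((K:ℝ)+2))
            + (2 / ((K:ℝ)+2)) ^ 2 * (C * (1 + δ))
          = 4 * (C * (1 + δ)) / ((K:ℝ)+2) - 4 * (C * (1 + δ)) / ((K:ℝ)+2) ^ 2 := by
        field_simp
        ring
      have hnn : 0 ≤ 4 * (C * (1 + δ)) / ((K:ℝ)+2) ^ 2 := by positivity
      show R Q - R (P (K + m + 1)) ≤ 4 * (C * (1 + δ)) / ((K : ℝ) + 2)
      linarith
  have hph2' : ∀ Q ∈ Pset, ∀ k : ℕ, K ≤ k → k ≤ 2 * K + 2 →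
      R Q - R (P k) ≤ 4 * (C * (1 + δ)) / ((K : ℝ) + 2) := by
    intro Q hQ k h1 h2
    obtain ⟨j, rfl⟩ : ∃ j, k = K + j := ⟨k - K, by omega⟩
    exact hph2 Q hQ j (by omega)
  have hform : 4 * (C * (1 + δ)) / ((K:ℝ) + 2) = 4 * C * (1 + δ) / ((K:ℝ) + 2) := by ring_nf
  constructor
  · -- part (a)
    by_contra hcon
    push_neg at hcon
    have hγpos : (0:ℝ) < 2 / ((K:ℝ) + 2) := by positivity
    have hstep : ∀ k, K ≤ k → k ≤ 2 * K + 1 →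
        R (P k) + (2 / ((K:ℝ)+2)) ^ 2 * (C * (1 + δ)) < R (P (k + 1)) := by
      intro k h1 h2
      have hdesck := hdesc _ (hPmem k (by omega)) _ (hQmem _ h2) (γseq k) (hγ01 k).1 (hγ01 k).2
      rw [← hupdate _ h2] at hdesck
      have hγeq : γseq k = 2 / ((K:ℝ)+2) := by rw [hγseq, if_neg (by omega)]
      rw [hγeq] at hdesck
      have hg := hcon k h1 h2
      have h5 : (2/((K:ℝ)+2)) * (4 * C * (1 + δ) / ((K : ℝ) + 2))
          < (2/((K:ℝ)+2)) * dR (P k) (Qs k) := mul_lt_mul_of_pos_left hg hγpos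
      have h6 : (2/((K:ℝ)+2)) * (4 * C * (1 + δ) / ((K : ℝ) + 2))
          = 2 * ((2/((K:ℝ)+2)) ^ 2 * (C * (1 + δ))) := by
        field_simp
        ring
      have h7 : (2/((K:ℝ)+2)) ^ 2 * C ≤ (2/((K:ℝ)+2)) ^ 2 * (C * (1 + δ)) := by
        have : C ≤ C * (1 + δ) := by nlinarith
        exact mul_le_mul_of_nonneg_left this (by positivity)
      linarith
    have grow : ∀ m : ℕ, m + 1 ≤ K + 2 →
        R (P K) + ((m:ℝ) + 1) * ((2/((K:ℝ)+2)) ^ 2 * (C * (1 + δ))) < R (P (K + (m + 1))) := by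
      intro m
      induction m with
      | zero =>
        intro _
        have := hstep K le_rfl (by omega)
        push_cast
        show R (P K) + (0 + 1) * ((2/((K:ℝ)+2)) ^ 2 * (C * (1 + δ))) < R (P (K + 1))
        linarith
      | succ p ih =>
        intro h
        have h1 := ih (by omega)
        have h2 := hstep (K + (p + 1)) (by omega) (by omega)
        have he : K + (p + 1) + 1 = K + (p + 1 + 1) := by omega
        rw [he] at h2
        push_cast at h1 ⊢
        linarith
    have hfin := grow (K + 1) (by omega)
    have h2K : K + (K + 1 + 1) = 2 * K + 2 := by omega
    rw [h2K] at hfin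
    have hub := hph2' (P (2 * K + 2)) (hPmem _ le_rfl) K le_rfl (by omega)
    have hγ2 : (((K:ℕ) + 1 : ℕ):ℝ) + 1 = (K:ℝ) + 2 := by push_cast; ring
    rw [hγ2] at hfin
    have hc2 : ((K:ℝ) + 2) * ((2/((K:ℝ)+2)) ^ 2 * (C * (1 + δ))) = 4 * (C * (1 + δ)) / ((K:ℝ)+2) := by
      field_simp
      ring
    linarith
  · -- part (b)
    intro khat h1 h2 hg Q hQ
    have hPk := hPmem khat (by omega)
    refine ⟨hgrad _ hPk _ hQ, ?_⟩
    have ho := horacle khat h2 Q hQ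
    have hγeq : γseq khat = 2 / ((K:ℝ) + 2) := by rw [hγseq, if_neg (by omega)]
    rw [hγeq] at ho
    have harith : δ * (2 / ((K:ℝ)+2)) * C + 4 * C * (1 + δ) / ((K:ℝ)+2)
        = 2 * C * (2 + 3 * δ) / ((K:ℝ)+2) := by
      field_simp
      ring
    linarith
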